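/- arXiv:2007.08864 — 3 statements merged into one kernel-verified Lean document; each statement's English description precedes it below -/
import Mathlib

section
/- Let W be an n₂×n₁ matrix, J₁ a k₁×n₁ matrix, J₂ a k₂×n₂ matrix, x a unit vector in ℝ^{n₁}, and ε ≤ 1. Suppose ‖x − J₁ᵀJ₁x‖ ≤ ε and ‖WJ₁ᵀJ₁x − J₂ᵀJ₂WJ₁ᵀJ₁x‖ ≤ ε‖WJ₁ᵀJ₁x‖. Then ‖J₂ᵀJ₂WJ₁ᵀJ₁x − Wx‖ ≤ 3ε‖W‖, where ‖W‖ is the spectral norm. -/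
open Matrix

theorem ContinuousLinearMap.norm_sub_apply_le_of_norm_sub_le {𝕜 E F : Type*}
    [NontriviallyNormedField 𝕜] [SeminormedAddCommGroup E] [SeminormedAddCommGroup F]
    [NormedSpace 𝕜 E] [NormedSpace 𝕜 F] (T : E →L[𝕜] F) {x y : E} {z : F} {ε : ℝ}
    (hxy : ‖x - y‖ ≤ ε) (hz : ‖T y - z‖ ≤ ε * ‖T y‖) :
    ‖z - T x‖ ≤ (‖x‖ + ε + 1) * ε * ‖T‖ := by
  have hε : 0 ≤ ε := (norm_nonneg _).trans hxy
  have hy : ‖y‖ ≤ ‖x‖ + ε := (norm_le_norm_add_norm_sub x y).trans (by gcongr)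
  have hTy : ‖T y‖ ≤ ‖T‖ * (‖x‖ + ε) := (T.le_opNorm y).trans (by gcongr)
  have hTxy : ‖T y - T x‖ ≤ ‖T‖ * ε := by
    rw [← map_sub]
    exact (T.le_opNorm _).trans (by rw [norm_sub_rev]; gcongr)
  calc ‖z - T x‖ ≤ ‖z - T y‖ + ‖T y - T x‖ := norm_sub_le_norm_sub_add_norm_sub _ _ _
    _ ≤ ε * (‖T‖ * (‖x‖ + ε)) + ‖T‖ * ε := by
        rw [norm_sub_rev]
        gcongr
        exact hz.trans (by gcongr)
    _ = (‖x‖ + ε + 1) * ε * ‖T‖ := by ring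

theorem stmt_2_general {n₁ n₂ k₁ k₂ : ℕ} (W : Matrix (Fin n₂) (Fin n₁) ℝ)
    (J₁ : Matrix (Fin k₁) (Fin n₁) ℝ) (J₂ : Matrix (Fin k₂) (Fin n₂) ℝ)
    (x : EuclideanSpace ℝ (Fin n₁)) (ε : ℝ) (hε : ε ≤ 1)
    (hx : ‖x‖ = 1)
    (h1 : ‖x - Matrix.toEuclideanLin (J₁ᵀ * J₁) x‖ ≤ ε)
    (h2 : ‖Matrix.toEuclideanLin W (Matrix.toEuclideanLin (J₁ᵀ * J₁) x) -
            Matrix.toEuclideanLin (J₂ᵀ * J₂)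
              (Matrix.toEuclideanLin W (Matrix.toEuclideanLin (J₁ᵀ * J₁) x))‖ ≤
          ε * ‖Matrix.toEuclideanLin W (Matrix.toEuclideanLin (J₁ᵀ * J₁) x)‖) :
    ‖Matrix.toEuclideanLin (J₂ᵀ * J₂)
        (Matrix.toEuclideanLin W (Matrix.toEuclideanLin (J₁ᵀ * J₁) x)) -
        Matrix.toEuclideanLin W x‖ ≤
      3 * ε * ‖(Matrix.toEuclideanLin W).toContinuousLinearMap‖ := by
  have hε0 : 0 ≤ ε := (norm_nonneg _).trans h1
  calc _ ≤ (‖x‖ + ε + 1) * ε * ‖(Matrix.toEuclideanLin W).toContinuousLinearMap‖ :=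
        (Matrix.toEuclideanLin W).toContinuousLinearMap.norm_sub_apply_le_of_norm_sub_le h1 h2
    _ ≤ 3 * ε * ‖(Matrix.toEuclideanLin W).toContinuousLinearMap‖ := by
        rw [hx]
        gcongr
        linarith

theorem stmt_2 {n₁ n₂ k₁ k₂ : ℕ} (W : Matrix (Fin n₂) (Fin n₁) ℝ)
    (J₁ : Matrix (Fin k₁) (Fin n₁) ℝ) (J₂ : Matrix (Fin k₂) (Fin n₂) ℝ)
    (x : EuclideanSpace ℝ (Fin n₁)) (ε : ℝ) (hε0 : 0 < ε) (hε : ε ≤ 1)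
    (hx : ‖x‖ = 1)
    (h1 : ‖x - Matrix.toEuclideanLin (J₁ᵀ * J₁) x‖ ≤ ε)
    (h2 : ‖Matrix.toEuclideanLin W (Matrix.toEuclideanLin (J₁ᵀ * J₁) x) -
            Matrix.toEuclideanLin (J₂ᵀ * J₂)
              (Matrix.toEuclideanLin W (Matrix.toEuclideanLin (J₁ᵀ * J₁) x))‖ ≤
          ε * ‖Matrix.toEuclideanLin W (Matrix.toEuclideanLin (J₁ᵀ * J₁) x)‖) :
    ‖Matrix.toEuclideanLin (J₂ᵀ * J₂)
        (Matrix.toEuclideanLin W (Matrix.toEuclideanLin (J₁ᵀ * J₁) x)) -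
        Matrix.toEuclideanLin W x‖ ≤
      3 * ε * ‖(Matrix.toEuclideanLin W).toContinuousLinearMap‖ :=
  stmt_2_general W J₁ J₂ x ε hε hx h1 h2
end

section
/- Let P be an m×m real orthogonal projection matrix (P² = P, Pᵀ = P) of rank p, and let Λ be the diagonal matrix with nonnegative diagonal entries λ₁ ≥ λ₂ ≥ … ≥ λ_m ≥ 0. Then trace(PΛ) ≤ λ₁ + λ₂ + … + λ_p. -/
open Matrix

/-- Combinatorial core: if `0 ≤ d i ≤ 1` and `∑ d = p`, with `lam` nonincreasing
and nonnegative, then `∑ d i * lam i ≤ ∑_{i < p} lam i`. -/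
lemma stmt7_key {m p : ℕ} (d lam : Fin m → ℝ)
    (hd0 : ∀ i, 0 ≤ d i) (hd1 : ∀ i, d i ≤ 1)
    (hsum : ∑ i, d i = (p : ℝ))
    (hmono : ∀ i j : Fin m, i ≤ j → lam j ≤ lam i)
    (hnn : ∀ i, 0 ≤ lam i) :
    ∑ i, d i * lam i ≤
      ∑ i ∈ Finset.univ.filter (fun i : Fin m => (i : ℕ) < p), lam i := by
  by_cases hp : m ≤ p
  · have hfilter : Finset.univ.filter (fun i : Fin m => (i : ℕ) < p) = Finset.univ := by
      ext i
      simp [lt_of_lt_of_le i.isLt hp]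
    rw [hfilter]
    apply Finset.sum_le_sum
    intro i _
    nlinarith [hd0 i, hd1 i, hnn i]
  · push_neg at hp
    set c : ℝ := lam ⟨p, hp⟩ with hc
    set S : Finset (Fin m) := Finset.univ.filter (fun i : Fin m => (i : ℕ) < p) with hS
    have hcard : S.card = p := by
      have hfe : (Finset.range m).filter (fun i => i < p) = Finset.range p := by
        ext i
        simp only [Finset.mem_filter, Finset.mem_range]
        omega
      rw [hS, Finset.card_filter, Fin.sum_univ_eq_sum_range (fun i => if i < p then 1 else 0) m,
        ← Finset.sum_filter, hfe, Finset.sum_const, smul_eq_mul, mul_one, Finset.card_range]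
    have hle1 : ∀ i ∈ S, d i * lam i ≤ lam i + (d i - 1) * c := by
      intro i hi
      have hiP : (i : ℕ) < p := by simpa [hS] using hi
      have hci : c ≤ lam i := hmono i ⟨p, hp⟩ (by simp [Fin.le_def]; omega)
      nlinarith [hd1 i]
    have hle2 : ∀ i ∈ Finset.univ.filter (fun i : Fin m => ¬ (i : ℕ) < p),
        d i * lam i ≤ d i * c := by
      intro i hi
      have hiP : ¬ (i : ℕ) < p := by simpa using hi
      have hci : lam i ≤ c := hmono ⟨p, hp⟩ i (by simp [Fin.le_def]; omega)
      nlinarith [hd0 i]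
    have hsplit := Finset.sum_filter_add_sum_filter_not Finset.univ
      (fun i : Fin m => (i : ℕ) < p) (fun i => d i * lam i)
    have hsplit2 := Finset.sum_filter_add_sum_filter_not Finset.univ
      (fun i : Fin m => (i : ℕ) < p) d
    calc ∑ i, d i * lam i
        = ∑ i ∈ S, d i * lam i
          + ∑ i ∈ Finset.univ.filter (fun i : Fin m => ¬ (i : ℕ) < p), d i * lam i := by
          rw [hsplit]
      _ ≤ ∑ i ∈ S, (lam i + (d i - 1) * c)
          + ∑ i ∈ Finset.univ.filter (fun i : Fin m => ¬ (i : ℕ) < p), d i * c :=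
          add_le_add (Finset.sum_le_sum hle1) (Finset.sum_le_sum hle2)
      _ = ∑ i ∈ S, lam i + ((∑ i ∈ S, d i
          + ∑ i ∈ Finset.univ.filter (fun i : Fin m => ¬ (i : ℕ) < p), d i) - S.card) * c := by
          rw [Finset.sum_add_distrib, ← Finset.sum_mul, ← Finset.sum_mul,
            Finset.sum_sub_distrib, Finset.sum_const, nsmul_eq_mul, mul_one]
          ring
      _ = ∑ i ∈ S, lam i := by
          rw [hsplit2, hsum, hcard]
          simp

theorem stmt_7 {m p : ℕ} (P : Matrix (Fin m) (Fin m) ℝ)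
    (lam : Fin m → ℝ)
    (hP2 : P * P = P) (hPt : Pᵀ = P) (hrank : P.rank = p)
    (hmono : ∀ i j : Fin m, i ≤ j → lam j ≤ lam i)
    (hnn : ∀ i, 0 ≤ lam i) :
    (P * Matrix.diagonal lam).trace ≤
      ∑ i ∈ Finset.univ.filter (fun i : Fin m => (i : ℕ) < p), lam i := by
  -- diagonal entries of P are in [0,1]
  have hsym : ∀ a b : Fin m, P a b = P b a := by
    intro a b
    conv_lhs => rw [← hPt]
    rfl
  have hPP : ∀ i, P i i = ∑ j, P j i * P j i := by
    intro i
    conv_lhs => rw [← hP2]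
    rw [Matrix.mul_apply]
    exact Finset.sum_congr rfl fun j _ => by rw [hsym i j]
  have hd0 : ∀ i, 0 ≤ P i i := by
    intro i
    rw [hPP i]
    exact Finset.sum_nonneg fun j _ => mul_self_nonneg _
  have hd1 : ∀ i, P i i ≤ 1 := by
    intro i
    have hs : P i i * P i i ≤ ∑ j, P j i * P j i :=
      Finset.single_le_sum (f := fun j => P j i * P j i)
        (fun j _ => mul_self_nonneg _) (Finset.mem_univ i)
    have h2 : P i i * P i i ≤ P i i := by
      calc P i i * P i i ≤ ∑ j, P j i * P j i := hs
        _ = P i i := (hPP i).symm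
    nlinarith [hd0 i]
  -- trace P = p
  have htr : P.trace = (p : ℝ) := by
    have hf : P.mulVecLin ∘ₗ P.mulVecLin = P.mulVecLin := by
      rw [← Matrix.mulVecLin_mul, hP2]
    have hproj : LinearMap.IsProj (LinearMap.range P.mulVecLin) P.mulVecLin := by
      refine ⟨fun x => LinearMap.mem_range_self _ x, ?_⟩
      rintro x ⟨y, rfl⟩
      exact DFunLike.congr_fun hf y
    have htr2 := hproj.trace
    have heq : LinearMap.trace ℝ (Fin m → ℝ) P.mulVecLin = P.trace := by
      rw [LinearMap.trace_eq_matrix_trace ℝ (Pi.basisFun ℝ (Fin m)),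
        LinearMap.toMatrix_eq_toMatrix']
      congr 1
      rw [← Matrix.toLin'_apply' P, LinearMap.toMatrix'_toLin']
    rw [← heq, htr2, ← hrank]
    rfl
  -- rewrite the trace of the product
  have htrace : (P * Matrix.diagonal lam).trace = ∑ i, P i i * lam i := by
    rw [Matrix.trace]
    congr 1
    ext i
    simp [Matrix.diag, Matrix.mul_apply, Matrix.diagonal]
  rw [htrace]
  apply stmt7_key (fun i => P i i) lam hd0 hd1 _ hmono hnn
  rw [← htr]
  rfl
end

section
/- Let Y be m×d and X̃ be ℓ×d with X̃X̃ᵀ invertible, set Σ = YX̃ᵀ(X̃X̃ᵀ)⁻¹X̃Yᵀ, and let P be a symmetric m×m matrix with P² = P and PΣ = ΣP. Define Ȳ = P·Y·X̃ᵀ·(X̃X̃ᵀ)⁻¹·X̃. Then trace((Ȳ−Y)(Ȳ−Y)ᵀ) = trace(YYᵀ) − trace(PΣ). -/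
open Matrix

theorem stmt_10 {m ℓ d : ℕ} (Y : Matrix (Fin m) (Fin d) ℝ)
    (X : Matrix (Fin ℓ) (Fin d) ℝ) (hX : IsUnit (X * Xᵀ))
    (P : Matrix (Fin m) (Fin m) ℝ) (hPt : Pᵀ = P) (hP2 : P * P = P)
    (hcomm : P * (Y * Xᵀ * (X * Xᵀ)⁻¹ * X * Yᵀ) = (Y * Xᵀ * (X * Xᵀ)⁻¹ * X * Yᵀ) * P) :
    ((P * Y * Xᵀ * (X * Xᵀ)⁻¹ * X - Y) * (P * Y * Xᵀ * (X * Xᵀ)⁻¹ * X - Y)ᵀ).trace =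
      (Y * Yᵀ).trace - (P * (Y * Xᵀ * (X * Xᵀ)⁻¹ * X * Yᵀ)).trace := by
  have hd : IsUnit (X * Xᵀ).det := (Matrix.isUnit_iff_isUnit_det _).mp hX
  set Q : Matrix (Fin d) (Fin d) ℝ := Xᵀ * (X * Xᵀ)⁻¹ * X with hQ
  have hit : ((X * Xᵀ)⁻¹)ᵀ = (X * Xᵀ)⁻¹ := by
    rw [Matrix.transpose_nonsing_inv, Matrix.transpose_mul, Matrix.transpose_transpose]
  have hQt : Qᵀ = Q := by
    simp [hQ, Matrix.transpose_mul, hit, Matrix.mul_assoc]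
  have hQ2 : Q * Q = Q := by
    calc Q * Q = Xᵀ * ((X * Xᵀ)⁻¹ * (X * Xᵀ) * ((X * Xᵀ)⁻¹ * X)) := by
          simp [hQ, Matrix.mul_assoc]
      _ = Q := by rw [Matrix.nonsing_inv_mul _ hd]; simp [hQ, Matrix.mul_assoc]
  have hPYQ : P * Y * Xᵀ * (X * Xᵀ)⁻¹ * X = P * Y * Q := by
    simp [hQ, Matrix.mul_assoc]
  have hSig : Y * Xᵀ * (X * Xᵀ)⁻¹ * X * Yᵀ = Y * Q * Yᵀ := by
    simp [hQ, Matrix.mul_assoc]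
  rw [hPYQ, hSig]
  have expand : (P * Y * Q - Y) * (P * Y * Q - Y)ᵀ =
      P * Y * Q * (Qᵀ * (Yᵀ * Pᵀ)) - P * Y * Q * Yᵀ - Y * (Qᵀ * (Yᵀ * Pᵀ)) + Y * Yᵀ := by
    rw [Matrix.transpose_sub]
    simp [Matrix.sub_mul, Matrix.mul_sub, Matrix.transpose_mul, Matrix.mul_assoc]
    abel
  rw [expand, hQt, hPt]
  have h1 : P * Y * Q * (Q * (Yᵀ * P)) = P * (Y * Q * Yᵀ) * P := by
    calc P * Y * Q * (Q * (Yᵀ * P)) = P * Y * (Q * Q) * Yᵀ * P := by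
          simp [Matrix.mul_assoc]
      _ = _ := by rw [hQ2]; simp [Matrix.mul_assoc]
  rw [h1]
  have h2 : (P * (Y * Q * Yᵀ) * P).trace = (P * (Y * Q * Yᵀ)).trace := by
    rw [Matrix.trace_mul_comm, ← Matrix.mul_assoc, hP2]
  have h3 : (Y * (Q * (Yᵀ * P))).trace = (P * (Y * Q * Yᵀ)).trace := by
    rw [show Y * (Q * (Yᵀ * P)) = (Y * Q * Yᵀ) * P by simp [Matrix.mul_assoc],
      Matrix.trace_mul_comm]
  have h4 : (P * Y * Q * Yᵀ).trace = (P * (Y * Q * Yᵀ)).trace := by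
    simp [Matrix.mul_assoc]
  rw [Matrix.trace_add, Matrix.trace_sub, Matrix.trace_sub, h2, h3, h4]
  ring
end
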